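/- Let γ, c_f, d be complex numbers with γ ≠ 0 and set c₁ = c_f²/(4γ²). Then for every natural number j, the negative-index Fourier coefficient of θ ↦ exp(ψ(e^{iθ})) satisfies the symmetry relation (1/(2π)) ∫₀^{2π} exp(ψ(e^{iθ}))·e^{+ijθ} dθ = c₁^j · a_j, where a_j = (1/(2π)) ∫₀^{2π} exp(ψ(e^{iθ}))·e^{−ijθ} dθ. -/

import Mathlib

/-!
On the circle `|z| = |c₁|` the substitution `z = c₁ / w`, `|w| = 1`, together with
`ψ(c₁ / w) = ψ(w)`, turns `exp(ψ(z)) z^j` into `c₁^j exp(ψ(w)) w^(-j)`. Since `exp ∘ ψ` is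
holomorphic on `ℂ ∖ {0}`, circle averages of `exp(ψ(z)) z^j` do not depend on the radius, so
the average over the unit circle equals the one over `|z| = |c₁|`. When `c₁ = 0`, `ψ` is affine
and the mean value property makes both sides vanish for `j ≥ 1`.
-/

/-- The conformal map associated with the Faber polynomials. -/
noncomputable def faberPsi (γ cf d : ℂ) (w : ℂ) : ℂ :=
  γ * w + d + cf ^ 2 / (4 * γ * w)

/-- The Faber coefficients of the exponential function. -/
noncomputable def faberCoeff (γ cf d : ℂ) (j : ℕ) : ℂ :=
  (1 / (2 * (Real.pi : ℂ))) * ∫ θ in (0 : ℝ)..(2 * Real.pi),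
    Complex.exp (faberPsi γ cf d (Complex.exp ((θ : ℂ) * Complex.I))) *
      Complex.exp (-(Complex.I * (j : ℂ) * (θ : ℂ)))

open Complex Metric Real

section CircleAverage

variable {E : Type*} [NormedAddCommGroup E] [NormedSpace ℂ E]

theorem circleAverage_eq_of_differentiableOn_compl_singleton {f : ℂ → E} {c : ℂ}
    (hf : DifferentiableOn ℂ f {c}ᶜ) {r R : ℝ} (hr : 0 < r) (hR : 0 < R) :
    circleAverage f c r = circleAverage f c R := by
  wlog hle : r ≤ R generalizing r R
  · exact (this hR hr (le_of_not_ge hle)).symm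
  have hg : DifferentiableOn ℂ (fun z ↦ (z - c)⁻¹ • f z) {c}ᶜ :=
    ((differentiableOn_id.sub_const c).inv fun z hz ↦ sub_ne_zero.2 hz).smul hf
  have hcompl : ∀ {ρ : ℝ}, 0 < ρ → ∀ z ∈ closedBall c R \ ball c ρ, z ∈ ({c}ᶜ : Set ℂ) :=
    fun hρ z hz hzc ↦ hz.2 (by simp [Set.mem_singleton_iff.1 hzc, hρ])
  rw [circleAverage_eq_circleIntegral hr.ne', circleAverage_eq_circleIntegral hR.ne',
    circleIntegral_eq_of_differentiable_on_annulus_off_countable hr hle Set.countable_empty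
      (hg.continuousOn.mono fun z hz ↦ hcompl hr z hz)
      fun z hz ↦ hg.differentiableAt (isOpen_compl_singleton.mem_nhds
        (hcompl hr z ⟨ball_subset_closedBall hz.1.1, fun h ↦ hz.1.2 (ball_subset_closedBall h)⟩))]

theorem circleAverage_comp_mul (f : ℂ → E) (c : ℂ) :
    circleAverage (fun z ↦ f (c * z)) 0 1 = circleAverage f 0 ‖c‖ := by
  rw [circleAverage_eq_integral_add (f := f) (arg c), circleAverage]
  congr 2 with θ
  have hpolar : c * exp (θ * I) = ‖c‖ * exp ((θ + arg c : ℝ) * I) := by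
    conv_lhs => rw [← norm_mul_exp_arg_mul_I c]
    push_cast
    rw [add_mul, Complex.exp_add]
    ring
  simp only [circleMap, ofReal_one, one_mul, zero_add, hpolar]

theorem circleAverage_comp_div (f : ℂ → E) (c : ℂ) :
    circleAverage (fun z ↦ f (c / z)) 0 1 = circleAverage f 0 ‖c‖ := by
  simp_rw [div_eq_mul_inv]
  rw [circleAverage_zero_one_congr_inv (f := fun z ↦ f (c * z)), circleAverage_comp_mul]

end CircleAverage

theorem circleAverage_zero_one_eq_integral (f : ℂ → ℂ) :
    circleAverage f 0 1 = (1 / (2 * (π : ℂ))) * ∫ θ in (0 : ℝ)..(2 * π), f (exp (θ * I)) := by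
  simp only [circleAverage_def, circleMap, ofReal_one, one_mul, zero_add, Complex.real_smul]
  push_cast
  ring

theorem circleAverage_mul_zpow_eq_integral (f : ℂ → ℂ) (n : ℤ) :
    circleAverage (fun z ↦ f z * z ^ n) 0 1 =
      (1 / (2 * (π : ℂ))) * ∫ θ in (0 : ℝ)..(2 * π), f (exp (θ * I)) * exp (I * n * θ) := by
  rw [circleAverage_zero_one_eq_integral]
  congr 2 with θ
  rw [← Complex.exp_int_mul]
  ring_nf

theorem circleAverage_mul_pow_succ_eq_zero {f : ℂ → ℂ} (hf : Differentiable ℂ f) (k : ℕ) :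
    circleAverage (fun z ↦ f z * z ^ (k + 1)) 0 1 = 0 := by
  rw [DiffContOnCl.circleAverage (f := fun z ↦ f z * z ^ (k + 1))
    (hf.mul (differentiable_pow _)).diffContOnCl]
  simp

theorem circleAverage_mul_pow_of_comp_div_eq {f : ℂ → ℂ} (hf : DifferentiableOn ℂ f {0}ᶜ)
    {c : ℂ} (hc : c ≠ 0) (hsymm : ∀ z ≠ 0, f (c / z) = f z) (j : ℕ) :
    circleAverage (fun z ↦ f z * z ^ j) 0 1 =
      c ^ j * circleAverage (fun z ↦ f z * (z ^ j)⁻¹) 0 1 :=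
  calc circleAverage (fun z ↦ f z * z ^ j) 0 1
    _ = circleAverage (fun z ↦ f z * z ^ j) 0 ‖c‖ :=
      circleAverage_eq_of_differentiableOn_compl_singleton (hf.mul (differentiableOn_pow j))
        one_pos (norm_pos_iff.2 hc)
    _ = circleAverage (fun z ↦ f (c / z) * (c / z) ^ j) 0 1 := (circleAverage_comp_div _ c).symm
    _ = circleAverage (fun z ↦ c ^ j * (f z * (z ^ j)⁻¹)) 0 1 :=
      circleAverage_congr_sphere fun z hz ↦ by
        rw [hsymm z (ne_of_mem_sphere hz (by norm_num)), div_pow, div_eq_mul_inv]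
        ring
    _ = c ^ j * circleAverage (fun z ↦ f z * (z ^ j)⁻¹) 0 1 :=
      circleAverage_fun_smul (a := c ^ j) (f := fun z ↦ f z * (z ^ j)⁻¹)

section Faber

variable {γ cf d : ℂ}

theorem faberPsi_eq_of_mul_eq_zero (h : γ * cf = 0) (w : ℂ) : faberPsi γ cf d w = γ * w + d := by
  rcases mul_eq_zero.1 h with h0 | h0 <;> simp [faberPsi, h0]

theorem faberPsi_div (hγ : γ ≠ 0) (hcf : cf ≠ 0) (w : ℂ) :
    faberPsi γ cf d (cf ^ 2 / (4 * γ ^ 2) / w) = faberPsi γ cf d w := by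
  rcases eq_or_ne w 0 with rfl | hw
  · simp [faberPsi]
  · have h_lin : γ * (cf ^ 2 / (4 * γ ^ 2) / w) = cf ^ 2 / (4 * γ * w) := by field_simp
    have h_inv : cf ^ 2 / (4 * γ * (cf ^ 2 / (4 * γ ^ 2) / w)) = γ * w := by field_simp
    rw [faberPsi, faberPsi, h_lin, h_inv]
    ring

theorem differentiableOn_faberPsi (hγ : γ ≠ 0) : DifferentiableOn ℂ (faberPsi γ cf d) {0}ᶜ :=
  fun w hw ↦ by
    have h : 4 * γ * w ≠ 0 := by simpa [hγ] using hw
    unfold faberPsi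
    fun_prop (disch := exact h)

theorem faberCoeff_eq_circleAverage (j : ℕ) :
    faberCoeff γ cf d j = circleAverage (fun z ↦ exp (faberPsi γ cf d z) * (z ^ j)⁻¹) 0 1 := by
  have h := circleAverage_mul_zpow_eq_integral (fun z ↦ exp (faberPsi γ cf d z)) (-j)
  simp only [zpow_neg, zpow_natCast, Int.cast_neg, Int.cast_natCast, neg_mul, mul_neg] at h
  rw [h, faberCoeff]

end Faber

theorem faberCoeff_neg_index_general (γ cf d : ℂ) (j : ℕ) :
    (1 / (2 * (Real.pi : ℂ))) * ∫ θ in (0 : ℝ)..(2 * Real.pi),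
        Complex.exp (faberPsi γ cf d (Complex.exp ((θ : ℂ) * Complex.I))) *
          Complex.exp (Complex.I * (j : ℂ) * (θ : ℂ)) =
      (cf ^ 2 / (4 * γ ^ 2)) ^ j * faberCoeff γ cf d j := by
  have h := circleAverage_mul_zpow_eq_integral (fun z ↦ exp (faberPsi γ cf d z)) j
  simp only [zpow_natCast, Int.cast_natCast] at h
  rw [← h, faberCoeff_eq_circleAverage]
  by_cases hγcf : γ * cf = 0
  · have hc : cf ^ 2 / (4 * γ ^ 2) = 0 := by rcases mul_eq_zero.1 hγcf with h0 | h0 <;> simp [h0]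
    simp_rw [hc, faberPsi_eq_of_mul_eq_zero hγcf]
    cases j with
    | zero => simp
    | succ k =>
      rw [zero_pow k.succ_ne_zero, zero_mul]
      exact circleAverage_mul_pow_succ_eq_zero (by fun_prop) k
  · obtain ⟨hγ, hcf⟩ := mul_ne_zero_iff.1 hγcf
    exact circleAverage_mul_pow_of_comp_div_eq (differentiableOn_faberPsi hγ).cexp
      (by simp [hγ, hcf]) (fun z _ ↦ by rw [faberPsi_div hγ hcf]) j

/-- The symmetry relation between positive- and negative-index Fourier coefficients of
`θ ↦ exp(ψ(e^{iθ}))`: the `(−j)`-th coefficient equals `c₁^j` times the `j`-th one. -/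
theorem faberCoeff_neg_index (γ cf d : ℂ) (hγ : γ ≠ 0) (j : ℕ) :
    (1 / (2 * (Real.pi : ℂ))) * ∫ θ in (0 : ℝ)..(2 * Real.pi),
        Complex.exp (faberPsi γ cf d (Complex.exp ((θ : ℂ) * Complex.I))) *
          Complex.exp (Complex.I * (j : ℂ) * (θ : ℂ)) =
      (cf ^ 2 / (4 * γ ^ 2)) ^ j * faberCoeff γ cf d j :=
  faberCoeff_neg_index_general γ cf d j
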